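/- Existence of k-cohesive solutions (mathematical core of Theorem 3): for every finite nonempty type R, every payoff function ν : Finset R → ℝ, and every integer k ≥ 1, there exists a decomposition (D_1, …, D_m) of R that is a k-cohesive solution, i.e., every coalition D_i is k-cohesive and the decomposition is expansion-free. -/
import Mathlib


/-- A coalition `D` is *k-cohesive* (w.r.t. the payoff function `ν`) if every
nonempty proper subset with at most `k` players has strictly smaller payoff. -/
def KCohesive {R : Type*} [DecidableEq R] (ν : Finset R → ℝ) (k : ℕ)
    (D : Finset R) : Prop :=
  ∀ C : Finset R, C.Nonempty → C ⊂ D → C.card ≤ k → ν C < ν D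

/-- A coalition `D` is *maximally k-cohesive* in a finite set `S` if `D ⊆ S`,
`|D| ≤ k`, `D` is k-cohesive, and `ν D ≥ ν D'` for every nonempty `D' ⊆ S`
with `|D'| ≤ k`. -/
def MaxKCohesiveIn {R : Type*} [DecidableEq R] (ν : Finset R → ℝ) (k : ℕ)
    (D S : Finset R) : Prop :=
  D ⊆ S ∧ D.card ≤ k ∧ KCohesive ν k D ∧
    ∀ D' : Finset R, D' ⊆ S → D'.Nonempty → D'.card ≤ k → ν D' ≤ ν D

/-- A *decomposition* of `R` is a finite family of nonempty, pairwise disjoint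
subsets of `R` whose union is all of `R`. -/
def IsDecomposition {R : Type*} [Fintype R] [DecidableEq R] {m : ℕ}
    (D : Fin m → Finset R) : Prop :=
  (∀ i, (D i).Nonempty) ∧ (∀ i j, i ≠ j → Disjoint (D i) (D j)) ∧
    Finset.univ.biUnion D = Finset.univ

/-- The tail union `S i = D i ∪ D (i+1) ∪ … ∪ D (m-1)` of a family of coalitions. -/
def tailUnion {R : Type*} [Fintype R] [DecidableEq R] {m : ℕ}
    (D : Fin m → Finset R) (i : Fin m) : Finset R :=
  (Finset.univ.filter (fun j => i ≤ j)).biUnion D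

/-- A decomposition `(D 1, …, D m)` is *maximally k-cohesive* if each `D i` is
maximally k-cohesive in `S i = D i ∪ D (i+1) ∪ … ∪ D m`. -/
def MaxKCohesiveDecomposition {R : Type*} [Fintype R] [DecidableEq R]
    (ν : Finset R → ℝ) (k : ℕ) {m : ℕ} (D : Fin m → Finset R) : Prop :=
  IsDecomposition D ∧ ∀ i : Fin m, MaxKCohesiveIn ν k (D i) (tailUnion D i)

/-- A decomposition is *expansion-free* if merging any two distinct coalitions
does not increase the larger of their payoffs. -/
def ExpansionFree {R : Type*} [DecidableEq R] (ν : Finset R → ℝ) {m : ℕ}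
    (D : Fin m → Finset R) : Prop :=
  ∀ i j, i ≠ j → ν (D i ∪ D j) ≤ max (ν (D i)) (ν (D j))

lemma aux_decomp {R : Type*} [Fintype R] [DecidableEq R] (ν : Finset R → ℝ) (k : ℕ)
    (S : Finset R) :
    ∃ (m : ℕ) (F : Fin m → Finset R), (∀ i, (F i).Nonempty) ∧
      (∀ i j, i ≠ j → Disjoint (F i) (F j)) ∧ Finset.univ.biUnion F = S ∧
      (∀ i, KCohesive ν k (F i)) ∧
      (∀ i j : Fin m, i < j → ν (F i ∪ F j) ≤ ν (F i)) := by
  induction S using Finset.strongInduction with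
  | _ S ih =>
  rcases S.eq_empty_or_nonempty with rfl | hS
  · exact ⟨0, Fin.elim0, fun i => i.elim0, fun i => i.elim0, by simp,
      fun i => i.elim0, fun i => i.elim0⟩
  · have hT : (S.powerset.filter (fun C => C.Nonempty)).Nonempty :=
      ⟨S, by simp [hS]⟩
    obtain ⟨D₁, hD₁mem, hD₁max⟩ := Finset.exists_max_image _ ν hT
    obtain ⟨D, hDmem, hDmin⟩ := Finset.exists_min_image
      ((S.powerset.filter (fun C => C.Nonempty)).filter (fun C => ν D₁ ≤ ν C))
      (fun C => C.card)
      ⟨D₁, by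
        simp only [Finset.mem_filter] at hD₁mem ⊢
        exact ⟨hD₁mem, le_rfl⟩⟩
    simp only [Finset.mem_filter, Finset.mem_powerset] at hDmem
    obtain ⟨⟨hDS, hDne⟩, hDν⟩ := hDmem
    have hmax : ∀ C, C ⊆ S → C.Nonempty → ν C ≤ ν D := fun C hCS hCne =>
      le_trans (hD₁max C (by simp [Finset.mem_filter, Finset.mem_powerset, hCS, hCne])) hDν
    have hstrict : ∀ C, C.Nonempty → C ⊂ D → ν C < ν D := by
      intro C hCne hCD
      have hle := hmax C (hCD.subset.trans hDS) hCne
      rcases lt_or_eq_of_le hle with h | h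
      · exact h
      · exfalso
        have hcard : D.card ≤ C.card := hDmin C (by
          simp only [Finset.mem_filter, Finset.mem_powerset]
          exact ⟨⟨hCD.subset.trans hDS, hCne⟩, hDν.trans_eq h.symm⟩)
        exact absurd (Finset.card_lt_card hCD) (not_lt.mpr hcard)
    obtain ⟨m, E, hEne, hEdisj, hEun, hEcoh, hEord⟩ :=
      ih (S \ D) (Finset.sdiff_ssubset hDS hDne)
    have hEsub : ∀ j, E j ⊆ S \ D := fun j =>
      hEun ▸ Finset.subset_biUnion_of_mem E (Finset.mem_univ j)
    refine ⟨m + 1, Fin.cons D E, ?_, ?_, ?_, ?_, ?_⟩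
    · intro i
      induction i using Fin.cases with
      | zero => simpa using hDne
      | succ i => simpa using hEne i
    · intro i j hij
      induction i using Fin.cases with
      | zero =>
        induction j using Fin.cases with
        | zero => exact absurd rfl hij
        | succ j =>
          simp only [Fin.cons_zero, Fin.cons_succ]
          exact (Finset.disjoint_sdiff.mono_right (hEsub j))
      | succ i =>
        induction j using Fin.cases with
        | zero =>
          simp only [Fin.cons_zero, Fin.cons_succ]
          exact (Finset.disjoint_sdiff.mono_right (hEsub i)).symm
        | succ j =>
          simp only [Fin.cons_succ]
          exact hEdisj i j (fun h => hij (by rw [h]))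
    · have : Finset.univ.biUnion (Fin.cons D E : Fin (m + 1) → Finset R)
          = D ∪ Finset.univ.biUnion E := by
        ext a
        simp only [Finset.mem_biUnion, Finset.mem_univ, true_and, Finset.mem_union,
          Fin.exists_fin_succ, Fin.cons_zero, Fin.cons_succ]
      rw [this, hEun, Finset.union_sdiff_of_subset hDS]
    · intro i
      induction i using Fin.cases with
      | zero =>
        intro C hCne hCD _
        simpa using hstrict C hCne (by simpa using hCD)
      | succ i => simpa using hEcoh i
    · intro i j hij
      induction i using Fin.cases with
      | zero =>
        induction j using Fin.cases with
        | zero => exact absurd hij (lt_irrefl _)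
        | succ j =>
          simp only [Fin.cons_zero, Fin.cons_succ]
          refine hmax _ ?_ ⟨hDne.choose, Finset.mem_union_left _ hDne.choose_spec⟩
          exact Finset.union_subset hDS ((hEsub j).trans (Finset.sdiff_subset))
      | succ i =>
        induction j using Fin.cases with
        | zero => exact absurd hij (by simp [Fin.lt_iff_val_lt_val])
        | succ j =>
          simp only [Fin.cons_succ]
          exact hEord i j (by simpa [Fin.succ_lt_succ_iff] using hij)

/-- **Theorem 3 (mathematical core): existence of k-cohesive solutions.**
For every payoff function `ν` on a finite nonempty type `R` and every `k ≥ 1`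
there is a decomposition of `R` all of whose coalitions are k-cohesive and which
is expansion-free. -/
theorem exists_kcohesive_solution (R : Type*) [Fintype R] [DecidableEq R]
    [Nonempty R] (ν : Finset R → ℝ) (k : ℕ) (hk : 1 ≤ k) :
    ∃ (m : ℕ) (D : Fin m → Finset R), IsDecomposition D ∧
      (∀ i, KCohesive ν k (D i)) ∧ ExpansionFree ν D := by
  obtain ⟨m, F, hne, hdisj, hun, hcoh, hord⟩ := aux_decomp ν k (Finset.univ : Finset R)
  refine ⟨m, F, ⟨hne, hdisj, hun⟩, hcoh, ?_⟩
  intro i j hij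
  rcases lt_trichotomy i j with h | h | h
  · exact (hord i j h).trans (le_max_left _ _)
  · exact absurd h hij
  · rw [Finset.union_comm]
    exact (hord j i h).trans (le_max_right _ _)
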